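/- arXiv:1503.06363 — 2 statements merged into one kernel-verified Lean document; each statement's English description precedes it below -/
import Mathlib

section
/- Let E be a real vector space, Γ : E ⇉ E a set-valued map with finitely closed convex values. Then Γ satisfies the KKM condition (for every finite A ⊆ D(Γ), [A] ⊆ ⋃_{x∈A} Γ(x)) if and only if Γ satisfies the finite intersection property on convex hulls (for every finite A ⊆ D(Γ), [A] ∩ ⋂_{x∈A} Γ(x) ≠ ∅). -/
/-!
FIP ⇒ KKM: for `y ∈ [A]` and `z ∈ [A] ∩ ⋂_{x ∈ A} Γ x`, follow the ray from `z` through `y` until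
it leaves `[A]`, at a point `w` of some facet `[A ∖ {x₀}]`. By induction `w ∈ Γ x` for some `x ∈ A`;
as `z ∈ Γ x` too, convexity gives `y ∈ [z, w] ⊆ Γ x`.

KKM ⇒ FIP: by induction, for every `x ∈ A` there is `p x ∈ [A]` lying in `Γ y` for all `y ≠ x`.
Pulling the `Γ x` back along the linear map sending the vertices of the standard simplex of `ℝ^A`
to the points `p x` gives closed convex sets `K x` covering the simplex, each containing all
vertices but its own. Such sets meet inside the simplex: otherwise a hyperplane `H` strictly
separates `⋂_{x ≠ x₀} K x` from `K x₀` within the simplex, and the induction hypothesis for the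
sets `K x ∩ H`, `x ≠ x₀`, yields a point on the wrong side of `H`.
-/

/-- A set `S` in a real vector space is *finitely closed* if its preimage under any
linear map from a Euclidean space `ℝⁿ` is closed. -/
def FinitelyClosed {E : Type*} [AddCommGroup E] [Module ℝ E] (S : Set E) : Prop :=
  ∀ (n : ℕ) (f : (Fin n → ℝ) →ₗ[ℝ] E), IsClosed (f ⁻¹' S)

open Set

theorem exists_mem_segment_eq {V : Type*} [AddCommGroup V] [Module ℝ V] (φ : V →ₗ[ℝ] ℝ)
    {x y : V} {u : ℝ} (hx : φ x ≤ u) (hy : u ≤ φ y) : ∃ z ∈ segment ℝ x y, φ z = u := by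
  have hu : u ∈ φ.toAffineMap '' segment ℝ x y := by
    rw [image_segment, LinearMap.coe_toAffineMap, segment_eq_Icc (hx.trans hy)]
    exact ⟨hx, hy⟩
  simpa using hu

section Separation

variable {ι V : Type*} [TopologicalSpace V] [AddCommGroup V] [Module ℝ V]
  [IsTopologicalAddGroup V] [ContinuousSMul ℝ V] [LocallyConvexSpace ℝ V] [T2Space V]

theorem exists_strongDual_lt_lt_of_inter_inter_eq_empty {S P T : Set V} (hSc : Convex ℝ S)
    (hS : IsCompact S) (hPc : Convex ℝ P) (hP : IsClosed P) (hTc : Convex ℝ T) (hT : IsClosed T)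
    (h : S ∩ P ∩ T = ∅) :
    ∃ (φ : StrongDual ℝ V) (u : ℝ), (∀ x ∈ S ∩ P, φ x < u) ∧ ∀ x ∈ S ∩ T, u < φ x := by
  obtain ⟨φ, u, v, hPu, huv, hTv⟩ := geometric_hahn_banach_compact_closed (hSc.inter hPc)
    (hS.inter_right hP) (hSc.inter hTc) (hS.isClosed.inter hT)
    (disjoint_left.2 fun x hxP hxT => h.subset ⟨hxP, hxT.2⟩)
  exact ⟨φ, u, hPu, fun x hx => huv.trans (hTv x hx)⟩

theorem convexHull_inter_biInter_nonempty_of_subset_biUnion {s : Finset ι} (hs : s.Nonempty)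
    {K : ι → Set V} {a : ι → V} (hK : ∀ i, Convex ℝ (K i)) (hKc : ∀ i, IsClosed (K i))
    (ha : ∀ i ∈ s, ∀ j ∈ s, i ≠ j → a i ∈ K j)
    (hcover : convexHull ℝ (a '' s) ⊆ ⋃ i ∈ s, K i) :
    (convexHull ℝ (a '' s) ∩ ⋂ i ∈ s, K i).Nonempty := by
  induction hs using Finset.Nonempty.cons_induction generalizing K a with
  | singleton i =>
    have hai : a i ∈ convexHull ℝ (a '' ↑({i} : Finset ι)) := subset_convexHull ℝ _ (by simp)
    exact ⟨a i, hai, by simpa using hcover hai⟩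
  | cons i₀ s hi₀ hs ih =>
    by_contra hempty
    set S := convexHull ℝ (a '' (s.cons i₀ hi₀))
    have hi₀S : i₀ ∈ s.cons i₀ hi₀ := Finset.mem_cons_self i₀ s
    have hsS : ∀ i ∈ s, i ∈ s.cons i₀ hi₀ := fun i => Finset.mem_cons_of_mem
    have haS : ∀ i ∈ s.cons i₀ hi₀, a i ∈ S := fun i hi =>
      subset_convexHull ℝ _ (mem_image_of_mem a hi)
    have hS : IsCompact S := ((Finset.finite_toSet _).image a).isCompact_convexHull (𝕜 := ℝ)
    obtain ⟨φ, u, hPu, hTu⟩ := exists_strongDual_lt_lt_of_inter_inter_eq_empty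
      (P := ⋂ i ∈ s, K i) (convex_convexHull ℝ _) hS (convex_iInter₂ fun i _ => hK i)
      (isClosed_biInter fun i _ => hKc i) (hK i₀) (hKc i₀)
      (eq_empty_iff_forall_notMem.2 fun x ⟨⟨hxS, hxs⟩, hxi₀⟩ =>
        hempty ⟨x, hxS, by simpa [hxi₀] using hxs⟩)
    have hcross : ∀ m ∈ s, ∃ b ∈ segment ℝ (a i₀) (a m), φ b = u := by
      intro m hm
      refine exists_mem_segment_eq φ.toLinearMap (hPu _ ⟨haS i₀ hi₀S, ?_⟩).le
        (hTu _ ⟨haS m (hsS m hm), ?_⟩).le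
      · exact mem_iInter₂.2 fun i hi => ha i₀ hi₀S i (hsS i hi) (ne_of_mem_of_not_mem hi hi₀).symm
      · exact ha m (hsS m hm) i₀ hi₀S (ne_of_mem_of_not_mem hm hi₀)
    choose! b hb hbu using hcross
    set H := {x | φ x = u}
    have hbSH : convexHull ℝ (b '' s) ⊆ S ∩ H := by
      refine convexHull_min ?_ ((convex_convexHull ℝ _).inter (convex_hyperplane φ.isLinear u))
      rintro _ ⟨m, hm, rfl⟩
      exact ⟨(convex_convexHull ℝ _).segment_subset (haS i₀ hi₀S) (haS m (hsS m hm)) (hb m hm),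
        hbu m hm⟩
    obtain ⟨q, hq, hqK⟩ := ih (K := fun j => K j ∩ H) (a := b)
      (fun j => (hK j).inter (convex_hyperplane φ.isLinear u))
      (fun j => (hKc j).inter (isClosed_eq φ.continuous continuous_const))
      (fun m hm j hj hmj => ⟨(hK j).segment_subset
        (ha i₀ hi₀S j (hsS j hj) (ne_of_mem_of_not_mem hj hi₀).symm)
        (ha m (hsS m hm) j (hsS j hj) hmj) (hb m hm), hbu m hm⟩)
      (fun x hx => by
        obtain ⟨hxS, hxH⟩ := hbSH hx
        obtain ⟨j, hj, hxj⟩ := mem_iUnion₂.1 (hcover hxS)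
        rcases Finset.mem_cons.1 hj with rfl | hj
        · exact absurd hxH (hTu x ⟨hxS, hxj⟩).ne'
        · exact mem_biUnion hj ⟨hxj, hxH⟩)
    exact (hPu q ⟨(hbSH hq).1, mem_iInter₂.2 fun j hj => (mem_iInter₂.1 hqK j hj).1⟩).ne
      (hbSH hq).2

end Separation

theorem Finset.exists_lt_one_mul_le {ι : Type*} {s : Finset ι} {l m : ι → ℝ}
    (hl : ∀ i ∈ s, 0 ≤ l i) (hm : ∀ i ∈ s, 0 ≤ m i)
    (hl₁ : ∑ i ∈ s, l i = 1) (hm₁ : ∑ i ∈ s, m i = 1) (hlm : ∃ i ∈ s, l i ≠ m i) :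
    ∃ c, 0 ≤ c ∧ c < 1 ∧ (∀ i ∈ s, c * m i ≤ l i) ∧ ∃ i₀ ∈ s, l i₀ = c * m i₀ := by
  classical
  obtain ⟨j, hj, hmj⟩ := exists_lt_of_sum_lt (s := s) (f := 0) (g := m) (by simp [hm₁])
  obtain ⟨i₀, hi₀, hmin⟩ := (s.filter (0 < m ·)).exists_min_image (fun i => l i / m i)
    ⟨j, mem_filter.2 ⟨hj, hmj⟩⟩
  rw [mem_filter] at hi₀
  have hle : ∀ i ∈ s, l i₀ / m i₀ * m i ≤ l i := by
    intro i hi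
    rcases (hm i hi).eq_or_lt with h | h
    · simpa [← h] using hl i hi
    · exact (le_div_iff₀ h).1 (hmin i (mem_filter.2 ⟨hi, h⟩))
  refine ⟨l i₀ / m i₀, div_nonneg (hl i₀ hi₀.1) hi₀.2.le, ?_, hle, i₀, hi₀.1,
    (div_mul_cancel₀ _ hi₀.2.ne').symm⟩
  by_contra! hc
  obtain ⟨i, hi, hne⟩ := hlm
  have hml : ∀ i ∈ s, m i ≤ l i := fun i hi =>
    (le_mul_of_one_le_left (hm i hi) hc).trans (hle i hi)
  exact hne ((sum_eq_sum_iff_of_le hml).1 (hm₁.trans hl₁.symm) i hi).symm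

section KKM

variable {E : Type*} [AddCommGroup E] [Module ℝ E]

theorem Finset.exists_mem_segment_of_mem_convexHull [DecidableEq E] {A : Finset E} {y z : E}
    (hy : y ∈ convexHull ℝ (A : Set E)) (hz : z ∈ convexHull ℝ (A : Set E)) (hyz : y ≠ z) :
    ∃ x₀ ∈ A, ∃ w ∈ convexHull ℝ (A.erase x₀ : Set E), y ∈ segment ℝ z w := by
  obtain ⟨l, hl, hl₁, rfl⟩ := mem_convexHull'.1 hy
  obtain ⟨m, hm, hm₁, rfl⟩ := mem_convexHull'.1 hz
  have hlm : ∃ i ∈ A, l i ≠ m i := by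
    by_contra! h
    exact hyz (sum_congr rfl fun i hi => by rw [h i hi])
  obtain ⟨c, hc₀, hc₁, hle, x₀, hx₀, hlx₀⟩ := exists_lt_one_mul_le hl hm hl₁ hm₁ hlm
  have hc : 1 - c ≠ 0 := by linarith
  -- `y = c • z + (1 - c) • w`, with the weights `ν` of `w` vanishing at `x₀` by the choice of `c`
  set ν : E → ℝ := fun i => (l i - c * m i) / (1 - c)
  have hνx₀ : ν x₀ = 0 := by simp [ν, hlx₀]
  refine ⟨x₀, hx₀, ∑ i ∈ A, ν i • i, mem_convexHull'.2 ⟨ν, ?_, ?_, ?_⟩, c, 1 - c, hc₀,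
    by linarith, by ring, ?_⟩
  · exact fun i hi => div_nonneg (sub_nonneg.2 (hle i (mem_of_mem_erase hi))) (by linarith)
  · rw [sum_erase _ hνx₀, ← sum_div, sum_sub_distrib, ← mul_sum, hl₁, hm₁, mul_one, div_self hc]
  · exact sum_erase _ (by rw [hνx₀, zero_smul])
  · rw [smul_sum, smul_sum, ← sum_add_distrib]
    refine sum_congr rfl fun i _ => ?_
    rw [smul_smul, smul_smul, ← add_smul]
    congr 1
    simp only [ν, mul_div_cancel₀ _ hc]
    ring

theorem FinitelyClosed.isClosed_preimage {ι : Type*} [Fintype ι] {S : Set E}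
    (hS : FinitelyClosed S) (f : (ι → ℝ) →ₗ[ℝ] E) : IsClosed (f ⁻¹' S) := by
  let e : (Fin (Fintype.card ι) → ℝ) ≃L[ℝ] (ι → ℝ) :=
    ContinuousLinearEquiv.piCongrLeft ℝ (fun _ => ℝ) (Fintype.equivFin ι).symm
  simpa [preimage_preimage] using (hS _ (f ∘ₗ e.toLinearMap)).preimage e.symm.continuous

theorem convexHull_inter_biInter_nonempty_of_forall_ne {Γ : E → Set E}
    (hconv : ∀ x, Convex ℝ (Γ x)) (hfc : ∀ x, FinitelyClosed (Γ x)) {A : Finset E}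
    (hA : A.Nonempty) (hcover : convexHull ℝ (A : Set E) ⊆ ⋃ x ∈ A, Γ x) (p : A → E)
    (hpA : ∀ x, p x ∈ convexHull ℝ (A : Set E)) (hpΓ : ∀ x : A, ∀ y ∈ A, y ≠ x → p x ∈ Γ y) :
    (convexHull ℝ (A : Set E) ∩ ⋂ x ∈ A, Γ x).Nonempty := by
  classical
  set f := Fintype.linearCombination ℝ p
  set e : A → (A → ℝ) := fun x => Pi.single x 1
  have hfe : ∀ x, f (e x) = p x := by simp [f, e]
  have hf : f '' convexHull ℝ (range e) ⊆ convexHull ℝ A := by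
    rw [f.image_convexHull, ← range_comp]
    exact convexHull_min (range_subset_iff.2 fun x => by simpa [hfe] using hpA x)
      (convex_convexHull ℝ _)
  obtain ⟨q, hq, hqΓ⟩ := convexHull_inter_biInter_nonempty_of_subset_biUnion (s := Finset.univ)
    (K := fun x : A => f ⁻¹' Γ x) (a := e) (Finset.univ_nonempty_iff.2 hA.to_subtype)
    (fun x => (hconv x).linear_preimage f) (fun x => (hfc x).isClosed_preimage f)
    (fun x _ y _ hxy => by simpa [hfe] using hpΓ x y y.2 (Subtype.coe_ne_coe.2 hxy.symm))
    (fun v hv => by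
      obtain ⟨x, hx, hvx⟩ := mem_iUnion₂.1 (hcover (hf ⟨v, by simpa using hv, rfl⟩))
      exact mem_biUnion (Finset.mem_univ (⟨x, hx⟩ : A)) hvx)
  refine ⟨f q, hf ⟨q, by simpa using hq, rfl⟩, mem_iInter₂.2 fun x hx => ?_⟩
  simpa using mem_iInter₂.1 hqΓ ⟨x, hx⟩ (Finset.mem_univ _)

def IsKKM (Γ : E → Set E) : Prop :=
  ∀ A : Finset E, (↑A : Set E) ⊆ {x | (Γ x).Nonempty} → convexHull ℝ (↑A : Set E) ⊆ ⋃ x ∈ A, Γ x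

def HasHullFIP (Γ : E → Set E) : Prop :=
  ∀ A : Finset E, A.Nonempty → (↑A : Set E) ⊆ {x | (Γ x).Nonempty} →
    (convexHull ℝ (↑A : Set E) ∩ ⋂ x ∈ A, Γ x).Nonempty

theorem IsKKM.hasHullFIP {Γ : E → Set E} (hconv : ∀ x, Convex ℝ (Γ x))
    (hfc : ∀ x, FinitelyClosed (Γ x)) (h : IsKKM Γ) : HasHullFIP Γ := by
  intro A
  induction A using Finset.strongInduction with | _ A ih => ?_
  classical
  intro hA hAD
  have hp : ∀ x : A, ∃ p ∈ convexHull ℝ (A : Set E), ∀ y ∈ A.erase x, p ∈ Γ y := by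
    intro x
    rcases (A.erase x).eq_empty_or_nonempty with he | hne
    · exact ⟨x, subset_convexHull ℝ _ x.2, by simp [he]⟩
    · obtain ⟨p, hp, hpΓ⟩ := ih _ (Finset.erase_ssubset x.2) hne (subset_trans (by simp) hAD)
      exact ⟨p, convexHull_mono (by simp) hp, mem_iInter₂.1 hpΓ⟩
  choose p hpA hpΓ using hp
  exact convexHull_inter_biInter_nonempty_of_forall_ne hconv hfc hA (h A hAD) p hpA
    fun x y hy hyx => hpΓ x y (Finset.mem_erase.2 ⟨hyx, hy⟩)

theorem HasHullFIP.isKKM {Γ : E → Set E} (hconv : ∀ x, Convex ℝ (Γ x)) (h : HasHullFIP Γ) :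
    IsKKM Γ := by
  intro A
  induction A using Finset.strongInduction with | _ A ih => ?_
  classical
  intro hAD y hy
  have hA : A.Nonempty := Finset.coe_nonempty.1 (convexHull_nonempty_iff.1 ⟨y, hy⟩)
  obtain ⟨z, hzA, hzΓ⟩ := h A hA hAD
  rw [mem_iInter₂] at hzΓ
  rcases eq_or_ne y z with rfl | hyz
  · obtain ⟨x, hx⟩ := hA
    exact mem_biUnion hx (hzΓ x hx)
  obtain ⟨x₀, hx₀, w, hw, hyw⟩ := A.exists_mem_segment_of_mem_convexHull hy hzA hyz
  obtain ⟨x, hx, hwx⟩ :=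
    mem_iUnion₂.1 (ih _ (Finset.erase_ssubset hx₀) (subset_trans (by simp) hAD) hw)
  have hxA := Finset.mem_of_mem_erase hx
  exact mem_biUnion hxA ((hconv x).segment_subset (hzΓ x hxA) hwx hyw)

end KKM

/-- For convex-valued maps with finitely closed values, the KKM condition is
equivalent to the finite intersection property on convex hulls. -/
theorem convex_kkm_iff_fip {E : Type*} [AddCommGroup E] [Module ℝ E]
    (Γ : E → Set E)
    (hconv : ∀ x, Convex ℝ (Γ x))
    (hfc : ∀ x, FinitelyClosed (Γ x)) :
    (∀ A : Finset E, (↑A : Set E) ⊆ {x | (Γ x).Nonempty} →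
      convexHull ℝ (↑A : Set E) ⊆ ⋃ x ∈ A, Γ x) ↔
    (∀ A : Finset E, A.Nonempty → (↑A : Set E) ⊆ {x | (Γ x).Nonempty} →
      (convexHull ℝ (↑A : Set E) ∩ ⋂ x ∈ A, Γ x).Nonempty) :=
  ⟨IsKKM.hasHullFIP hconv hfc, HasHullFIP.isKKM hconv⟩
end

section
/- Let E be a real locally convex topological vector space with dual E*, and T : E ⇉ E*. Then T is monotone if and only if for every x* ∈ E* and every nonempty compact convex subset K ⊆ E, there exists x̄ ∈ K such that ⟨y* − x*, y − x̄⟩ ≥ 0 for all (y,y*) in the graph of T with y ∈ K (i.e., the Minty variational inequality MVI(T, x*) has a solution on every nonempty compact convex K). -/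
/-!
Monotone ⇒ solvable: each graph point `(y, y*)` over `K` cuts out the closed half-space
`{x | 0 ≤ ⟨y* - x*, y - x⟩}`, so by compactness of `K` it suffices to meet finitely many of
them in `K`. For finitely many `(yᵢ, yᵢ*)` put `Aᵢⱼ = ⟨yᵢ* - x*, yᵢ - yⱼ⟩`; monotonicity says
`A + Aᵀ ≥ 0` entrywise, so `λᵀ A λ ≥ 0` on the simplex, and a saddle point of `(μ, λ) ↦ μᵀ A λ`
(von Neumann–Sion minimax) gives weights `λ` with `A λ ≥ 0`; then `x̄ = ∑ λⱼ yⱼ` works.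

Solvable ⇒ monotone: solve `MVI(T, (x* + y*)/2)` on the segment `[x, y]`.
-/

namespace Matrix

theorem dotProduct_mulVec_self_nonneg_of_add_transpose_nonneg {ι : Type*} [Fintype ι]
    {A : Matrix ι ι ℝ} (hA : ∀ i j, 0 ≤ A i j + A j i) {p : ι → ℝ} (hp : 0 ≤ p) :
    0 ≤ p ⬝ᵥ A *ᵥ p := by
  have hsym : 0 ≤ (A + Aᵀ) *ᵥ p := fun i =>
    Finset.sum_nonneg fun j _ => mul_nonneg (hA i j) (hp j)
  have := dotProduct_nonneg_of_nonneg hp hsym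
  rw [add_mulVec, dotProduct_add, dotProduct_transpose_mulVec] at this
  linarith

theorem exists_mem_stdSimplex_mulVec_nonneg {ι : Type*} [Fintype ι] [Nonempty ι]
    {A : Matrix ι ι ℝ} (hA : ∀ i j, 0 ≤ A i j + A j i) :
    ∃ l ∈ stdSimplex ℝ ι, 0 ≤ A *ᵥ l := by
  classical
  obtain ⟨i₀⟩ := ‹Nonempty ι›
  have hne : (stdSimplex ℝ ι).Nonempty := ⟨_, single_mem_stdSimplex ℝ i₀⟩
  have hcont (B : (ι → ℝ) →ₗ[ℝ] ℝ) : ContinuousOn B (stdSimplex ℝ ι) :=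
    (LinearMap.continuous_of_finiteDimensional B).continuousOn
  obtain ⟨m, hm, l, hl, hsaddle⟩ := Sion.exists_isSaddlePointOn (f := fun m l => toBilin' A m l)
    hne (convex_stdSimplex ℝ ι) (isCompact_stdSimplex ℝ ι)
    (fun l _ => (hcont ((toBilin' A).flip l)).lowerSemicontinuousOn)
    (fun l _ => (((toBilin' A).flip l).convexOn (convex_stdSimplex ℝ ι)).quasiconvexOn)
    (convex_stdSimplex ℝ ι) hne (isCompact_stdSimplex ℝ ι)
    (fun m _ => (hcont (toBilin' A m)).upperSemicontinuousOn)
    (fun m _ => ((toBilin' A m).concaveOn (convex_stdSimplex ℝ ι)).quasiconcaveOn)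
  refine ⟨l, hl, fun i => ?_⟩
  -- at the saddle point `(m, l)`: `0 ≤ m ⬝ᵥ A *ᵥ m ≤ eᵢ ⬝ᵥ A *ᵥ l`
  have := hsaddle _ (single_mem_stdSimplex ℝ i) m hm
  simp only [toBilin'_apply', single_dotProduct, one_mul] at this
  exact (dotProduct_mulVec_self_nonneg_of_add_transpose_nonneg hA hm.1).trans this

end Matrix

theorem exists_mem_stdSimplex_forall_nonneg_apply_sub_sum {ι E : Type*} [Fintype ι] [Nonempty ι]
    [AddCommGroup E] [Module ℝ E] {g : ι → E →ₗ[ℝ] ℝ} {y : ι → E}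
    (hgy : ∀ i j, 0 ≤ (g i - g j) (y i - y j)) :
    ∃ l ∈ stdSimplex ℝ ι, ∀ i, 0 ≤ g i (y i - ∑ j, l j • y j) := by
  let A : Matrix ι ι ℝ := Matrix.of fun i j => g i (y i - y j)
  have hA (i j : ι) : 0 ≤ A i j + A j i := by
    convert hgy i j using 1
    simp only [A, Matrix.of_apply, LinearMap.sub_apply, map_sub]
    ring
  obtain ⟨l, hl, hAl⟩ := Matrix.exists_mem_stdSimplex_mulVec_nonneg hA
  refine ⟨l, hl, fun i => ?_⟩
  have hsum : y i - ∑ j, l j • y j = ∑ j, l j • (y i - y j) := by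
    rw [Finset.sum_congr rfl fun j _ => smul_sub (l j) (y i) (y j), Finset.sum_sub_distrib,
      ← Finset.sum_smul, hl.2, one_smul]
  rw [hsum, map_sum]
  simpa [A, Matrix.mulVec, dotProduct, mul_comm] using hAl i

theorem Convex.exists_mem_forall_nonneg_apply_sub {ι E : Type*} [Fintype ι]
    [AddCommGroup E] [Module ℝ E] {K : Set E} (hK : Convex ℝ K) (hne : K.Nonempty)
    {g : ι → E →ₗ[ℝ] ℝ} {y : ι → E} (hyK : ∀ i, y i ∈ K)
    (hgy : ∀ i j, 0 ≤ (g i - g j) (y i - y j)) :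
    ∃ xb ∈ K, ∀ i, 0 ≤ g i (y i - xb) := by
  cases isEmpty_or_nonempty ι with
  | inl _ => exact ⟨hne.some, hne.some_mem, isEmptyElim⟩
  | inr _ =>
    obtain ⟨l, hl, hlg⟩ := exists_mem_stdSimplex_forall_nonneg_apply_sub_sum hgy
    exact ⟨_, hK.sum_mem (fun j _ => hl.1 j) hl.2 fun j _ => hyK j, hlg⟩

theorem IsCompact.exists_minty_solution {E : Type*} [AddCommGroup E] [Module ℝ E]
    [TopologicalSpace E] {T : E → Set (E →L[ℝ] ℝ)}
    (hT : ∀ x y (x' y' : E →L[ℝ] ℝ), x' ∈ T x → y' ∈ T y → 0 ≤ (y' - x') (y - x))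
    (z : E →L[ℝ] ℝ) {K : Set E} (hK : IsCompact K) (hne : K.Nonempty) (hKc : Convex ℝ K) :
    ∃ xb ∈ K, ∀ y ∈ K, ∀ y' ∈ T y, 0 ≤ (y' - z) (y - xb) := by
  let G := {p : E × (E →L[ℝ] ℝ) // p.1 ∈ K ∧ p.2 ∈ T p.1}
  let H (p : G) : Set E := {x | 0 ≤ (p.1.2 - z) (p.1.1 - x)}
  have hH (p : G) : IsClosed (H p) := by
    simp only [H, map_sub, sub_nonneg]
    exact isClosed_le (map_continuous _) continuous_const
  obtain ⟨xb, hxb, hxbH⟩ := hK.inter_iInter_nonempty H hH fun u => by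
    obtain ⟨xb, hxb, h⟩ := hKc.exists_mem_forall_nonneg_apply_sub hne
      (g := fun p : u => ((p.1.1.2 - z : E →L[ℝ] ℝ) : E →ₗ[ℝ] ℝ)) (y := fun p : u => p.1.1.1)
      (fun p => p.1.2.1) (fun p q => by simpa using hT _ _ _ _ q.1.2.2 p.1.2.2)
    exact ⟨xb, hxb, Set.mem_iInter₂.2 fun p hp => h ⟨p, hp⟩⟩
  exact ⟨xb, hxb, fun y hy y' hy' => Set.mem_iInter.1 hxbH ⟨(y, y'), hy, hy'⟩⟩

theorem monotone_of_minty_solvable {E : Type*} [AddCommGroup E] [Module ℝ E]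
    [TopologicalSpace E] [IsTopologicalAddGroup E] [ContinuousSMul ℝ E]
    {T : E → Set (E →L[ℝ] ℝ)}
    (hT : ∀ z : E →L[ℝ] ℝ, ∀ K : Set E, K.Nonempty → IsCompact K → Convex ℝ K →
      ∃ xb ∈ K, ∀ y ∈ K, ∀ y' ∈ T y, 0 ≤ (y' - z) (y - xb))
    (x y : E) (x' y' : E →L[ℝ] ℝ) (hx' : x' ∈ T x) (hy' : y' ∈ T y) :
    0 ≤ (y' - x') (y - x) := by
  have hxK : x ∈ convexHull ℝ {x, y} := subset_convexHull ℝ _ (by simp)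
  have hyK : y ∈ convexHull ℝ {x, y} := subset_convexHull ℝ _ (by simp)
  -- the Minty inequalities at `x` and `y` add up to half the monotonicity inequality,
  -- whatever the solution `xb` is
  obtain ⟨xb, -, hxb⟩ := hT ((2 : ℝ)⁻¹ • (x' + y')) _ ⟨x, hxK⟩
    ((Set.toFinite _).isCompact_convexHull ℝ) (convex_convexHull ℝ _)
  have hx := hxb x hxK x' hx'
  have hy := hxb y hyK y' hy'
  simp only [sub_apply, smul_apply, add_apply, map_sub, smul_eq_mul] at hx hy ⊢
  linear_combination 2 * hx + 2 * hy

theorem monotone_iff_minty_solvable_general {E : Type*} [AddCommGroup E] [Module ℝ E]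
    [TopologicalSpace E] [IsTopologicalAddGroup E] [ContinuousSMul ℝ E]
    (T : E → Set (E →L[ℝ] ℝ)) :
    (∀ x y (x' y' : E →L[ℝ] ℝ), x' ∈ T x → y' ∈ T y → 0 ≤ (y' - x') (y - x)) ↔
    (∀ z : E →L[ℝ] ℝ, ∀ K : Set E, K.Nonempty → IsCompact K → Convex ℝ K →
      ∃ xb ∈ K, ∀ y ∈ K, ∀ y' ∈ T y, 0 ≤ (y' - z) (y - xb)) :=
  ⟨fun hT z _ hne hK hKc => hK.exists_minty_solution hT z hne hKc, monotone_of_minty_solvable⟩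

/-- `T` is monotone iff for every `x* ∈ E*` and every nonempty compact convex
`K ⊆ E`, the Minty variational inequality `MVI(T, x*)` has a solution on `K`. -/
theorem monotone_iff_minty_solvable {E : Type*} [AddCommGroup E] [Module ℝ E]
    [TopologicalSpace E] [IsTopologicalAddGroup E] [ContinuousSMul ℝ E]
    [LocallyConvexSpace ℝ E] [T2Space E]
    (T : E → Set (E →L[ℝ] ℝ)) :
    (∀ x y (x' y' : E →L[ℝ] ℝ), x' ∈ T x → y' ∈ T y → 0 ≤ (y' - x') (y - x)) ↔
    (∀ z : E →L[ℝ] ℝ, ∀ K : Set E, K.Nonempty → IsCompact K → Convex ℝ K →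
      ∃ xb ∈ K, ∀ y ∈ K, ∀ y' ∈ T y, 0 ≤ (y' - z) (y - xb)) :=
  monotone_iff_minty_solvable_general T
end
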